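/- Let C be a compact subset of [1,2], let Ĉ := {(1/(c−4), c, c/(c−4)) : c ∈ C} ⊆ ℝ³, let S₄ := convexHull ℝ Ĉ, and for i ∈ {1, 2, 3} let Sᵢ := {(i, t, i·t) : t ∈ [1,2]}. Then for any p ∈ ℝ³ and any u ∈ ℝ³ with u ≠ 0, the line {p + t • u : t ∈ ℝ} intersects each of S₁, S₂, S₃, S₄ if and only if there exists c ∈ C such that {p + t • u : t ∈ ℝ} = {(s, c, s·c) : s ∈ ℝ}. In other words, the set of line transversals to {S₁, S₂, S₃, S₄} is exactly {ℓ_c : c ∈ C}, where ℓ_c := {(s, c, s·c) : s ∈ ℝ}. -/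

import Mathlib

/-!
The segments `S₁, S₂, S₃` lie on three lines of one ruling of the saddle `z = x y`, and a line
meeting them is a line `ℓ_b` of the other ruling. The set `Ĉ` lies in the plane `z = 4x + 1`, which
`ℓ_b` meets only in the lift `(1/(b-4), b, b/(b-4))` of `b`. Projected to the `(x, y)`-plane the
lifts lie on the convex branch `y < 4` of the hyperbola `x = 1/(y-4)`, so for `b ∉ C` the tangent
at the lift of `b` strictly separates it from the convex hull of `Ĉ`.
-/

open Set

namespace TransversalPrescription

local notation "E³" => EuclideanSpace ℝ (Fin 3)

def line (p u : E³) : Set E³ := {x | ∃ t : ℝ, x = p + t • u}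

def ruling (b : ℝ) : Set E³ := {q | ∃ s : ℝ, q 0 = s ∧ q 1 = b ∧ q 2 = s * b}

def crossSegment (a : ℝ) : Set E³ := {q | ∃ t ∈ Icc (1 : ℝ) 2, q 0 = a ∧ q 1 = t ∧ q 2 = a * t}

def liftedCurve (C : Set ℝ) : Set E³ :=
  {q | ∃ c ∈ C, q 0 = 1 / (c - 4) ∧ q 1 = c ∧ q 2 = c / (c - 4)}

theorem exists_add_smul_mem_iff {p u : E³} {X : Set E³} :
    (∃ t : ℝ, p + t • u ∈ X) ↔ (line p u ∩ X).Nonempty :=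
  ⟨fun ⟨t, ht⟩ => ⟨_, ⟨t, rfl⟩, ht⟩, fun ⟨_, ⟨t, rfl⟩, ht⟩ => ⟨t, ht⟩⟩

theorem line_eq_ruling {p u : E³} (hu₀ : u 0 ≠ 0) (hu₁ : u 1 = 0) (hu₂ : u 2 = p 1 * u 0)
    (hp : p 2 = p 0 * p 1) : line p u = ruling (p 1) := by
  ext x
  constructor
  · rintro ⟨t, rfl⟩
    refine ⟨p 0 + t * u 0, rfl, ?_, ?_⟩ <;>
      simp only [PiLp.add_apply, PiLp.smul_apply, smul_eq_mul, hu₁, hu₂, hp] <;> ring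
  · rintro ⟨s, hx₀, hx₁, hx₂⟩
    refine ⟨(s - p 0) / u 0, ?_⟩
    ext i
    fin_cases i <;>
      simp only [Fin.zero_eta, Fin.mk_one, Fin.reduceFinMk, PiLp.add_apply, PiLp.smul_apply,
        smul_eq_mul, hx₀, hx₁, hx₂, hu₁, hu₂, hp] <;> field_simp <;> ring

theorem line_eq_ruling_of_meets_crossSegments {p u : E³}
    (h₁ : (line p u ∩ crossSegment 1).Nonempty) (h₂ : (line p u ∩ crossSegment 2).Nonempty)
    (h₃ : (line p u ∩ crossSegment 3).Nonempty) : line p u = ruling (p 1) := by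
  obtain ⟨_, ⟨t₁, rfl⟩, y₁, -, hx₁, hy₁, hz₁⟩ := h₁
  obtain ⟨_, ⟨t₂, rfl⟩, y₂, -, hx₂, hy₂, hz₂⟩ := h₂
  obtain ⟨_, ⟨t₃, rfl⟩, y₃, -, hx₃, hy₃, hz₃⟩ := h₃
  simp only [PiLp.add_apply, PiLp.smul_apply, smul_eq_mul] at *
  have hd : (t₂ - t₁) * u 0 = 1 := by linear_combination hx₂ - hx₁
  have hu₀ : u 0 ≠ 0 := right_ne_zero_of_mul_eq_one hd
  have hdt : t₂ - t₁ ≠ 0 := left_ne_zero_of_mul_eq_one hd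
  -- `x = 1, 2, 3` is reached at equally spaced parameters, so `z = x y` at the three points
  -- forces `u 1 = 0`
  have ht₃ : t₃ = 2 * t₂ - t₁ := by
    have : (t₃ - t₂) * u 0 = (t₂ - t₁) * u 0 := by linear_combination hx₃ - 2 * hx₂ + hx₁
    linarith [mul_right_cancel₀ hu₀ this]
  subst ht₃
  have hu₁ : u 1 = 0 := by
    have : (2 * (t₂ - t₁)) * u 1 = 0 := by
      linear_combination 2 * (hz₂ - 2 * hy₂) - (hz₁ - hy₁) - (hz₃ - 3 * hy₃)
    exact (mul_eq_zero.1 this).resolve_left (mul_ne_zero two_ne_zero hdt)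
  have hu₂ : u 2 = p 1 * u 0 := by
    have : (t₂ - t₁) * u 2 = p 1 := by
      linear_combination (hz₂ - 2 * hy₂) - (hz₁ - hy₁) + (2 * t₂ - t₁) * hu₁
    linear_combination u 0 * this - u 2 * hd
  refine line_eq_ruling hu₀ hu₁ hu₂ ?_
  linear_combination (hz₁ - hy₁) - t₁ * hu₂ - p 1 * hx₁ + t₁ * hu₁

theorem ruling_inter_crossSegment_nonempty_iff {a b : ℝ} :
    (ruling b ∩ crossSegment a).Nonempty ↔ b ∈ Icc (1 : ℝ) 2 := by
  constructor
  · rintro ⟨q, ⟨s, -, hb, -⟩, t, ht, -, rfl, -⟩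
    exact hb ▸ ht
  · intro hb
    exact ⟨!₂[a, b, a * b], ⟨a, rfl, rfl, rfl⟩, b, hb, rfl, rfl, rfl⟩

theorem convexHull_liftedCurve_subset_plane {C : Set ℝ} (hC : (4 : ℝ) ∉ C) :
    convexHull ℝ (liftedCurve C) ⊆ {q | q 2 - 4 * q 0 = 1} := by
  refine convexHull_min ?_ (convex_hyperplane ⟨fun x y => ?_, fun c x => ?_⟩ 1)
  · rintro q ⟨c, hc, hq₀, -, hq₂⟩
    have : c - 4 ≠ 0 := sub_ne_zero.2 (ne_of_mem_of_not_mem hc hC)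
    rw [mem_ofPred_eq, hq₀, hq₂]
    field_simp
  all_goals simp only [PiLp.add_apply, PiLp.smul_apply, smul_eq_mul]; ring

theorem hyperbola_lt_tangent {b c : ℝ} (hc : c < 4) (hcb : c ≠ b) :
    c + (b - 4) ^ 2 / (c - 4) < 2 * b - 4 := by
  have key : c + (b - 4) ^ 2 / (c - 4) = 2 * b - 4 - (b - c) ^ 2 / (4 - c) := by
    field_simp [(sub_pos.2 hc).ne', (sub_neg.2 hc).ne]
    ring
  have : 0 < (b - c) ^ 2 / (4 - c) :=
    div_pos (sq_pos_of_ne_zero (sub_ne_zero.2 hcb.symm)) (sub_pos.2 hc)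
  linarith

theorem convexHull_liftedCurve_subset_halfSpace {C : Set ℝ} (hC : C ⊆ Iio 4) {b : ℝ}
    (hb : b ∉ C) : convexHull ℝ (liftedCurve C) ⊆ {q | q 1 + (b - 4) ^ 2 * q 0 < 2 * b - 4} := by
  refine convexHull_min ?_ (convex_halfSpace_lt ⟨fun x y => ?_, fun c x => ?_⟩ _)
  · rintro q ⟨c, hc, hq₀, hq₁, -⟩
    have := hyperbola_lt_tangent (hC hc) (ne_of_mem_of_not_mem hc hb)
    simp only [mem_ofPred_eq, hq₀, hq₁]
    rwa [mul_one_div]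
  all_goals simp only [PiLp.add_apply, PiLp.smul_apply, smul_eq_mul]; ring

theorem ruling_inter_convexHull_liftedCurve_nonempty_iff {C : Set ℝ} (hC : C ⊆ Iio 4) {b : ℝ} :
    (ruling b ∩ convexHull ℝ (liftedCurve C)).Nonempty ↔ b ∈ C := by
  constructor
  · rintro ⟨q, ⟨s, hs, hb, hq₂⟩, hq⟩
    by_contra hbC
    have hplane := convexHull_liftedCurve_subset_plane (fun h => self_notMem_Iio (hC h)) hq
    have hhalf := convexHull_liftedCurve_subset_halfSpace hC hbC hq
    simp only [mem_ofPred_eq, hs, hb, hq₂] at hplane hhalf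
    have : (b - 4) ^ 2 * s = b - 4 := by linear_combination (b - 4) * hplane
    linarith
  · intro hbC
    have hb : b - 4 ≠ 0 := sub_ne_zero.2 (hC hbC).ne
    refine ⟨!₂[1 / (b - 4), b, b / (b - 4)], ⟨1 / (b - 4), rfl, rfl, ?_⟩,
      subset_convexHull ℝ _ ⟨b, hbC, rfl, rfl, rfl⟩⟩
    simp only [Matrix.cons_val]
    field_simp

end TransversalPrescription

open TransversalPrescription in
theorem transversals_to_four_sets_eq_prescribed_lines_general
    (C : Set ℝ) (hCsub : C ⊆ Set.Icc (1 : ℝ) 2)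
    (Chat : Set (EuclideanSpace ℝ (Fin 3)))
    (hChat : Chat = {q | ∃ c ∈ C,
        q 0 = 1 / (c - 4) ∧ q 1 = c ∧ q 2 = c / (c - 4)})
    (S₄ : Set (EuclideanSpace ℝ (Fin 3))) (hS₄ : S₄ = convexHull ℝ Chat)
    (S : ℝ → Set (EuclideanSpace ℝ (Fin 3)))
    (hS : ∀ a : ℝ, S a = {q | ∃ t ∈ Set.Icc (1 : ℝ) 2,
        q 0 = a ∧ q 1 = t ∧ q 2 = a * t})
    (ℓ : ℝ → Set (EuclideanSpace ℝ (Fin 3)))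
    (hℓ : ∀ b : ℝ, ℓ b = {q | ∃ s : ℝ, q 0 = s ∧ q 1 = b ∧ q 2 = s * b})
    (p u : EuclideanSpace ℝ (Fin 3)) :
    ((∃ t : ℝ, p + t • u ∈ S 1) ∧ (∃ t : ℝ, p + t • u ∈ S 2) ∧
        (∃ t : ℝ, p + t • u ∈ S 3) ∧ (∃ t : ℝ, p + t • u ∈ S₄)) ↔
      ∃ c ∈ C, {x : EuclideanSpace ℝ (Fin 3) | ∃ t : ℝ, x = p + t • u} = ℓ c := by
  have hS : S = crossSegment := funext hS
  have hℓ : ℓ = ruling := funext hℓ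
  have hChat : Chat = liftedCurve C := hChat
  subst hS hℓ hChat hS₄
  have hC : C ⊆ Iio 4 := fun c hc => (hCsub hc).2.trans_lt (by norm_num)
  simp only [exists_add_smul_mem_iff]
  constructor
  · rintro ⟨h₁, h₂, h₃, h₄⟩
    have hline := line_eq_ruling_of_meets_crossSegments h₁ h₂ h₃
    rw [hline] at h₄
    exact ⟨p 1, (ruling_inter_convexHull_liftedCurve_nonempty_iff hC).1 h₄, hline⟩
  · rintro ⟨c, hc, hline⟩
    change line p u = ruling c at hline
    simp only [hline, ruling_inter_crossSegment_nonempty_iff,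
      ruling_inter_convexHull_liftedCurve_nonempty_iff hC]
    exact ⟨hCsub hc, hCsub hc, hCsub hc, hc⟩

/-- **Lemma (prescribing the set of line transversals).**
Let `C ⊆ [1,2]` be compact, `Ĉ = {(1/(c−4), c, c/(c−4)) : c ∈ C} ⊆ ℝ³`,
`S₄ = convexHull ℝ Ĉ`, and for `i = 1, 2, 3` let `Sᵢ = {(i, t, i·t) : t ∈ [1,2]}`.
Then a line `{p + t • u : t ∈ ℝ}` (with `u ≠ 0`) intersects each of `S₁, S₂, S₃, S₄`
if and only if it equals `ℓ_c = {(s, c, s·c) : s ∈ ℝ}` for some `c ∈ C`. -/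
theorem transversals_to_four_sets_eq_prescribed_lines
    (C : Set ℝ) (hC : IsCompact C) (hCsub : C ⊆ Set.Icc (1 : ℝ) 2)
    (Chat : Set (EuclideanSpace ℝ (Fin 3)))
    (hChat : Chat = {q | ∃ c ∈ C,
        q 0 = 1 / (c - 4) ∧ q 1 = c ∧ q 2 = c / (c - 4)})
    (S₄ : Set (EuclideanSpace ℝ (Fin 3))) (hS₄ : S₄ = convexHull ℝ Chat)
    (S : ℝ → Set (EuclideanSpace ℝ (Fin 3)))
    (hS : ∀ a : ℝ, S a = {q | ∃ t ∈ Set.Icc (1 : ℝ) 2,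
        q 0 = a ∧ q 1 = t ∧ q 2 = a * t})
    (ℓ : ℝ → Set (EuclideanSpace ℝ (Fin 3)))
    (hℓ : ∀ b : ℝ, ℓ b = {q | ∃ s : ℝ, q 0 = s ∧ q 1 = b ∧ q 2 = s * b})
    (p u : EuclideanSpace ℝ (Fin 3)) (hu : u ≠ 0) :
    ((∃ t : ℝ, p + t • u ∈ S 1) ∧ (∃ t : ℝ, p + t • u ∈ S 2) ∧
        (∃ t : ℝ, p + t • u ∈ S 3) ∧ (∃ t : ℝ, p + t • u ∈ S₄)) ↔
      ∃ c ∈ C, {x : EuclideanSpace ℝ (Fin 3) | ∃ t : ℝ, x = p + t • u} = ℓ c :=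
  transversals_to_four_sets_eq_prescribed_lines_general C hCsub Chat hChat S₄ hS₄ S hS ℓ hℓ p u
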